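/- arXiv:2602.21274 — 2 statements merged into one kernel-verified Lean document; each statement's English description precedes it below -/
import Mathlib

section
/- The function u is continuously differentiable on ℝ, twice continuously differentiable on ℝ ∖ {b*}, nondecreasing and convex on ℝ, and satisfies u(x) > x − c for every x < b* (while u(x) = x − c for every x ≥ b*). -/
/-!
With `P x = ∏ᵢ (x - βᵢ)` and `Q x = ∏ⱼ (x - rⱼ)`, the partial fraction expansion
`P / Q = ∑ⱼ wⱼ / (x - rⱼ)` has residues `wⱼ = P rⱼ / Q' rⱼ`. Comparing leading coefficients and
evaluating at the zeros `βᵢ` of `P` shows `A w = e₀`, so Cramer's rule gives `Kⱼ = R wⱼ / rⱼ²`.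
Interlacing gives `P rⱼ` and `Q' rⱼ` the same number of negative factors, hence `wⱼ > 0`.
Evaluating `P / Q` and its logarithmic derivative at `0` yields `∑ Kⱼ rⱼ = 1` and `∑ Kⱼ = b* - c`:
the exponential sum meets the line `x - c` at `b*` with the same slope. Being a positive combination
of increasing convex exponentials, its derivative increases to `1` on `(-∞, b*]`, and all the
claimed properties of the pasted function follow.
-/

open Finset Matrix MeasureTheory

/-- The (i,j) cofactor of a square matrix: (−1)^(i+j) times the determinant of the
submatrix obtained by deleting row `i` and column `j`. -/
noncomputable def cof {n : ℕ} (M : Matrix (Fin (n + 1)) (Fin (n + 1)) ℝ)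
    (i j : Fin (n + 1)) : ℝ :=
  (-1 : ℝ) ^ ((i : ℕ) + (j : ℕ)) * (M.submatrix i.succAbove j.succAbove).det

open Polynomial Filter Topology

theorem Finset.prod_eq_neg_one_pow_mul_prod_abs {ι R : Type*} [CommRing R]
    [LinearOrder R] [IsStrictOrderedRing R] (s : Finset ι) (f : ι → R) :
    ∏ i ∈ s, f i = (-1) ^ #{i ∈ s | f i < 0} * ∏ i ∈ s, |f i| := by
  have h : ∀ i ∈ s, f i = (if f i < 0 then -1 else 1) * |f i| := fun i _ => by
    split_ifs with hi
    · rw [abs_of_neg hi]; ring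
    · rw [abs_of_nonneg (not_lt.1 hi), one_mul]
  rw [prod_congr rfl h, prod_mul_distrib, prod_ite, prod_const, prod_const_one, mul_one]

theorem div_pos_of_card_filter_neg_eq {ι κ R : Type*} [Field R] [LinearOrder R]
    [IsStrictOrderedRing R] {s : Finset ι} {t : Finset κ} {f : ι → R} {g : κ → R}
    (hf : ∀ i ∈ s, f i ≠ 0) (hg : ∀ i ∈ t, g i ≠ 0)
    (hcard : #{i ∈ s | f i < 0} = #{i ∈ t | g i < 0}) :
    0 < (∏ i ∈ s, f i) / ∏ i ∈ t, g i := by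
  rw [prod_eq_neg_one_pow_mul_prod_abs s, prod_eq_neg_one_pow_mul_prod_abs t, hcard,
    mul_div_mul_left _ _ (pow_ne_zero _ (by norm_num))]
  exact div_pos (prod_pos fun i hi => abs_pos.2 (hf i hi))
    (prod_pos fun i hi => abs_pos.2 (hg i hi))

namespace Lagrange

variable {F ι κ : Type*} [Field F] [DecidableEq ι] {s : Finset ι} {v : ι → F}

noncomputable def nodalResidue (s : Finset ι) (v : ι → F) (P : F[X]) (i : ι) : F :=
  P.eval (v i) / ∏ j ∈ s.erase i, (v i - v j)

theorem sum_nodalResidue_nodal (hvs : Set.InjOn v s) {t : Finset κ} (β : κ → F)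
    (hst : #s = #t + 1) : ∑ i ∈ s, nodalResidue s v (nodal t β) i = 1 := by
  have hdeg : (nodal t β).degree < #s := by
    rw [degree_nodal, hst]; exact_mod_cast Nat.lt_succ_self _
  rw [← (nodal_monic (s := t) (v := β)).coeff_natDegree, natDegree_nodal]
  simpa only [nodalResidue, hst, Nat.add_sub_cancel] using (coeff_eq_sum hvs hdeg).symm

theorem eval_div_eval_nodal (hvs : Set.InjOn v s) {P : F[X]} (hP : P.degree < #s) {x : F}
    (hx : ∀ i ∈ s, x ≠ v i) :
    P.eval x / (nodal s v).eval x = ∑ i ∈ s, nodalResidue s v P i / (x - v i) := by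
  rw [div_eq_iff (eval_nodal_not_at_node hx)]
  nth_rewrite 1 [eq_interpolate hvs hP]
  rw [eval_interpolate_not_at_node _ hx, mul_comm]
  congr 1
  refine sum_congr rfl fun i _ => ?_
  rw [nodalResidue, nodalWeight, prod_inv_distrib]
  ring

theorem logDeriv_eval_nodal {𝕜 : Type*} [NontriviallyNormedField 𝕜] {t : Finset κ} {β : κ → 𝕜}
    {x : 𝕜} (hx : ∀ i ∈ t, x ≠ β i) :
    logDeriv (fun y => (nodal t β).eval y) x = ∑ i ∈ t, 1 / (x - β i) := by
  simp_rw [eval_nodal]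
  rw [logDeriv_prod (fun i hi => sub_ne_zero.2 (hx i hi)) (fun i _ => by fun_prop)]
  refine sum_congr rfl fun i _ => ?_
  simp [logDeriv_apply]

theorem sum_nodalResidue_div_sq {𝕜 : Type*} [NontriviallyNormedField 𝕜] {s : Finset ι}
    {v : ι → 𝕜} (hvs : Set.InjOn v s) {t : Finset κ} (β : κ → 𝕜) (hst : #t < #s) {x : 𝕜}
    (hx : ∀ i ∈ s, x ≠ v i) (hxβ : ∀ i ∈ t, x ≠ β i) :
    ∑ i ∈ s, nodalResidue s v (nodal t β) i / (x - v i) ^ 2 =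
      (nodal t β).eval x / (nodal s v).eval x *
        (∑ i ∈ s, 1 / (x - v i) - ∑ i ∈ t, 1 / (x - β i)) := by
  set c := nodalResidue s v (nodal t β)
  have hdeg : (nodal t β).degree < #s := by rw [degree_nodal]; exact_mod_cast hst
  have hP := eval_nodal_not_at_node hxβ
  have hQ := eval_nodal_not_at_node hx
  have hG : HasDerivAt (fun y => ∑ i ∈ s, c i / (y - v i))
      (∑ i ∈ s, -(c i / (x - v i) ^ 2)) x := by
    refine HasDerivAt.fun_sum fun i hi => ?_
    have h := (((hasDerivAt_id' x).sub_const (v i)).fun_inv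
      (sub_ne_zero.2 (hx i hi))).const_mul (c i)
    simp only [← div_eq_mul_inv] at h
    exact h.congr_deriv (by ring)
  have heq : (fun y => (nodal t β).eval y / (nodal s v).eval y) =ᶠ[𝓝 x]
      fun y => ∑ i ∈ s, c i / (y - v i) := by
    filter_upwards [(eventually_all_finset s).2 fun i hi => eventually_ne_nhds (hx i hi)]
      with y hy using eval_div_eval_nodal hvs hdeg hy
  have hlog := logDeriv_div x hP hQ (Polynomial.differentiableAt _) (Polynomial.differentiableAt _)
  rw [logDeriv_eval_nodal hxβ, logDeriv_eval_nodal hx, (logDeriv_congr_nhds heq).eq_of_nhds,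
    logDeriv_apply, hG.deriv, ← heq.eq_of_nhds, sum_neg_distrib,
    div_eq_iff (div_ne_zero hP hQ)] at hlog
  linear_combination -hlog

end Lagrange

open Lagrange

theorem det_mul_eq_cof_of_mulVec_eq_single {n : ℕ} (M : Matrix (Fin (n + 1)) (Fin (n + 1)) ℝ)
    {x : Fin (n + 1) → ℝ} (hx : M *ᵥ x = Pi.single 0 1) (j : Fin (n + 1)) :
    M.det * x j = cof M 0 j := by
  have h := congrFun (congrArg (M.adjugate *ᵥ ·) hx) j
  simp only [mulVec_mulVec, adjugate_mul, smul_mulVec, one_mulVec, mulVec_single_one] at h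
  exact h.trans (adjugate_fin_succ_eq_det_submatrix M j 0)

section TangentPaste

open Set

noncomputable def tangentPaste (g : ℝ → ℝ) (b c x : ℝ) : ℝ :=
  if x < b then g x else x - c

variable {g : ℝ → ℝ} {b c : ℝ}

theorem tangentPaste_of_le {x : ℝ} (hx : b ≤ x) : tangentPaste g b c x = x - c :=
  if_neg (not_lt.2 hx)

theorem tangentPaste_eventuallyEq_of_lt {x : ℝ} (hx : x < b) : tangentPaste g b c =ᶠ[𝓝 x] g := by
  filter_upwards [Iio_mem_nhds hx] with y hy using if_pos hy

theorem tangentPaste_eventuallyEq_of_gt {x : ℝ} (hx : b < x) :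
    tangentPaste g b c =ᶠ[𝓝 x] fun y => y - c := by
  filter_upwards [Ioi_mem_nhds hx] with y hy using tangentPaste_of_le hy.le

theorem hasDerivAt_tangentPaste (hg : Differentiable ℝ g) (hgb : g b = b - c)
    (hg'b : deriv g b = 1) (x : ℝ) :
    HasDerivAt (tangentPaste g b c) (deriv g (min x b)) x := by
  rcases lt_trichotomy x b with hx | rfl | hx
  · rw [min_eq_left hx.le]
    exact (hg x).hasDerivAt.congr_of_eventuallyEq (tangentPaste_eventuallyEq_of_lt hx)
  · rw [min_self, hg'b]
    have hleft : HasDerivWithinAt (tangentPaste g x c) 1 (Iic x) x := by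
      refine (hg'b ▸ (hg x).hasDerivAt.hasDerivWithinAt).congr (fun y hy => ?_) ?_
      · rcases (mem_Iic.1 hy).lt_or_eq with hy | rfl
        · exact if_pos hy
        · rw [tangentPaste_of_le le_rfl, hgb]
      · rw [tangentPaste_of_le le_rfl, hgb]
    have hright : HasDerivWithinAt (tangentPaste g x c) 1 (Ici x) x :=
      ((hasDerivAt_id' x).sub_const c).hasDerivWithinAt.congr
        (fun y hy => tangentPaste_of_le hy) (tangentPaste_of_le le_rfl)
    simpa using hleft.union hright
  · rw [min_eq_right hx.le, hg'b]
    exact ((hasDerivAt_id' x).sub_const c).congr_of_eventuallyEq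
      (tangentPaste_eventuallyEq_of_gt hx)

theorem contDiff_one_tangentPaste (hg : ContDiff ℝ 1 g) (hgb : g b = b - c)
    (hg'b : deriv g b = 1) : ContDiff ℝ 1 (tangentPaste g b c) := by
  have hD := hasDerivAt_tangentPaste (hg.differentiable one_ne_zero) hgb hg'b
  rw [contDiff_one_iff_deriv, funext fun x => (hD x).deriv]
  exact ⟨fun x => (hD x).differentiableAt,
    (hg.continuous_deriv le_rfl).comp (continuous_id.min continuous_const)⟩

theorem contDiffOn_two_tangentPaste (hg : ContDiff ℝ 2 g) :
    ContDiffOn ℝ 2 (tangentPaste g b c) {b}ᶜ := by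
  intro x hx
  refine ContDiffAt.contDiffWithinAt ?_
  rcases lt_or_gt_of_ne (mem_compl_singleton_iff.1 hx) with hx | hx
  · exact hg.contDiffAt.congr_of_eventuallyEq (tangentPaste_eventuallyEq_of_lt hx)
  · exact (contDiff_id.sub contDiff_const).contDiffAt.congr_of_eventuallyEq
      (tangentPaste_eventuallyEq_of_gt hx)

theorem monotone_tangentPaste (hg : Differentiable ℝ g) (hgb : g b = b - c)
    (hg'b : deriv g b = 1) (hg' : ∀ x ≤ b, 0 ≤ deriv g x) : Monotone (tangentPaste g b c) := by
  have hD := hasDerivAt_tangentPaste hg hgb hg'b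
  exact monotone_of_deriv_nonneg (fun x => (hD x).differentiableAt) fun x => by
    rw [(hD x).deriv]
    exact hg' _ (min_le_right x b)

theorem convexOn_tangentPaste (hg : Differentiable ℝ g) (hgb : g b = b - c)
    (hg'b : deriv g b = 1) (hg' : MonotoneOn (deriv g) (Iic b)) :
    ConvexOn ℝ univ (tangentPaste g b c) := by
  have hD := hasDerivAt_tangentPaste hg hgb hg'b
  refine Monotone.convexOn_univ_of_deriv (fun x => (hD x).differentiableAt) fun x y hxy => ?_
  rw [(hD x).deriv, (hD y).deriv]
  exact hg' (min_le_right x b) (min_le_right y b) (min_le_min_right b hxy)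

theorem sub_lt_tangentPaste (hg : Differentiable ℝ g) (hgb : g b = b - c)
    (hg'b : deriv g b = 1) (hg' : StrictMonoOn (deriv g) (Iic b)) {x : ℝ} (hx : x < b) :
    x - c < tangentPaste g b c x := by
  have hanti : StrictAntiOn (fun y => g y - (y - c)) (Iic b) := by
    refine strictAntiOn_of_deriv_neg (convex_Iic b)
      (hg.continuous.sub (continuous_id.sub continuous_const)).continuousOn fun y hy => ?_
    rw [interior_Iic] at hy
    rw [((hg y).hasDerivAt.fun_sub ((hasDerivAt_id' y).sub_const c)).deriv, sub_neg, ← hg'b]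
    exact hg' (mem_Iic.2 hy.le) self_mem_Iic hy
  have h := hanti (mem_Iic.2 hx.le) self_mem_Iic hx
  simp only [hgb, sub_self, sub_pos] at h
  rwa [tangentPaste, if_pos hx]

end TangentPaste

section ExpSum

variable (s : Finset ℕ) (K r : ℕ → ℝ) (b : ℝ)

theorem hasDerivAt_sum_mul_exp (x : ℝ) :
    HasDerivAt (fun y => ∑ j ∈ s, K j * Real.exp (r j * (y - b)))
      (∑ j ∈ s, K j * r j * Real.exp (r j * (x - b))) x := by
  refine HasDerivAt.fun_sum fun j _ => ?_
  have h := ((((hasDerivAt_id' x).sub_const b).const_mul (r j)).exp).const_mul (K j)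
  exact h.congr_deriv (by ring)

theorem strictMono_deriv_sum_mul_exp (hs : s.Nonempty) (hK : ∀ j ∈ s, 0 < K j)
    (hr : ∀ j ∈ s, 0 < r j) :
    StrictMono (deriv fun y => ∑ j ∈ s, K j * Real.exp (r j * (y - b))) := by
  intro x y hxy
  simp only [(hasDerivAt_sum_mul_exp s K r b _).deriv]
  refine sum_lt_sum_of_nonempty hs fun j hj => ?_
  gcongr
  · exact mul_pos (hK j hj) (hr j hj)
  · exact hr j hj

theorem deriv_sum_mul_exp_pos (hs : s.Nonempty) (hK : ∀ j ∈ s, 0 < K j)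
    (hr : ∀ j ∈ s, 0 < r j) (x : ℝ) :
    0 < deriv (fun y => ∑ j ∈ s, K j * Real.exp (r j * (y - b))) x := by
  rw [(hasDerivAt_sum_mul_exp s K r b x).deriv]
  exact sum_pos (fun j hj => mul_pos (mul_pos (hK j hj) (hr j hj)) (Real.exp_pos _)) hs

end ExpSum

theorem degree_nodal_Icc_lt_card_range {F : Type*} [Field F] (n : ℕ) (β : ℕ → F) :
    (nodal (Icc 1 n) β).degree < #(range (n + 1)) := by
  rw [degree_nodal, Nat.card_Icc, card_range, Nat.add_sub_cancel]
  exact_mod_cast n.lt_succ_self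

def Interlaced (n : ℕ) (r β : ℕ → ℝ) : Prop :=
  ∀ k, 1 ≤ k → k ≤ n → r (k - 1) < β k ∧ β k < r k

namespace Interlaced

variable {n : ℕ} {r β : ℕ → ℝ}

theorem strictMonoOn (h : Interlaced n r β) : StrictMonoOn r (Set.Iic n) :=
  strictMonoOn_Iic_of_lt_succ fun m hm => by
    simpa using (h (m + 1) (by omega) (by omega)).1.trans (h (m + 1) (by omega) (by omega)).2

theorem injOn (h : Interlaced n r β) : Set.InjOn r (range (n + 1)) :=
  h.strictMonoOn.injOn.mono fun _ hj => mem_range_succ_iff.1 hj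

theorem lt_of_lt (h : Interlaced n r β) {i j : ℕ} (hi : i ≤ n) (hji : j < i) : r j < β i :=
  (h.strictMonoOn.monotoneOn (Set.mem_Iic.2 (by omega)) (Set.mem_Iic.2 (by omega))
    (Nat.le_sub_one_of_lt hji)).trans_lt (h i (by omega) hi).1

theorem lt_of_le (h : Interlaced n r β) {i j : ℕ} (hi : 1 ≤ i) (hj : j ≤ n) (hij : i ≤ j) :
    β i < r j :=
  (h i hi (hij.trans hj)).2.trans_le
    (h.strictMonoOn.monotoneOn (Set.mem_Iic.2 (hij.trans hj)) (Set.mem_Iic.2 hj) hij)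

theorem pos (h : Interlaced n r β) (hr0 : 0 < r 0) {j : ℕ} (hj : j ≤ n) : 0 < r j :=
  hr0.trans_le
    (h.strictMonoOn.monotoneOn (Set.mem_Iic.2 n.zero_le) (Set.mem_Iic.2 hj) j.zero_le)

theorem beta_pos (h : Interlaced n r β) (hr0 : 0 < r 0) {i : ℕ} (hi : i ∈ Icc 1 n) : 0 < β i :=
  hr0.trans (h.lt_of_lt (mem_Icc.1 hi).2 (mem_Icc.1 hi).1)

theorem prod_pos (h : Interlaced n r β) (hr0 : 0 < r 0) : 0 < ∏ k ∈ range (n + 1), r k :=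
  Finset.prod_pos fun _ hk => h.pos hr0 (mem_range_succ_iff.1 hk)

theorem prod_beta_pos (h : Interlaced n r β) (hr0 : 0 < r 0) : 0 < ∏ i ∈ Icc 1 n, β i :=
  Finset.prod_pos fun _ hi => h.beta_pos hr0 hi

theorem nodalResidue_pos (h : Interlaced n r β) {j : ℕ} (hj : j ≤ n) :
    0 < nodalResidue (range (n + 1)) r (nodal (Icc 1 n) β) j := by
  have hβ : {i ∈ Icc 1 n | r j - β i < 0} = Ioc j n := by
    ext i
    simp only [mem_filter, mem_Icc, mem_Ioc, sub_neg]
    exact ⟨fun ⟨⟨_, hi⟩, hlt⟩ =>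
        ⟨not_le.1 fun hij => (h.lt_of_le (by omega) hj hij).not_gt hlt, hi⟩,
      fun ⟨hji, hi⟩ => ⟨⟨by omega, hi⟩, h.lt_of_lt hi hji⟩⟩
  have hr : {k ∈ (range (n + 1)).erase j | r j - r k < 0} = Ioc j n := by
    ext k
    simp only [mem_filter, mem_erase, mem_range, mem_Ioc, sub_neg]
    constructor
    · rintro ⟨⟨-, hk⟩, hlt⟩
      exact ⟨(h.strictMonoOn.lt_iff_lt (Set.mem_Iic.2 hj) (Set.mem_Iic.2 (by omega))).1 hlt,
        by omega⟩
    · rintro ⟨hjk, hk⟩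
      exact ⟨⟨by omega, by omega⟩, h.strictMonoOn (Set.mem_Iic.2 hj) (Set.mem_Iic.2 hk) hjk⟩
  rw [nodalResidue, eval_nodal]
  refine div_pos_of_card_filter_neg_eq (fun i hi => ?_) (fun k hk => ?_) (by rw [hβ, hr])
  · obtain ⟨hi1, hin⟩ := mem_Icc.1 hi
    rcases lt_or_ge j i with hji | hij
    · exact sub_ne_zero.2 (h.lt_of_lt hin hji).ne
    · exact sub_ne_zero.2 (h.lt_of_le hi1 hj hij).ne'
  · obtain ⟨hkj, hk⟩ := mem_erase.1 hk
    exact sub_ne_zero.2 fun e => hkj (h.injOn (mem_range_succ_iff.2 hj) hk e).symm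

theorem sum_nodalResidue (h : Interlaced n r β) :
    ∑ j ∈ range (n + 1), nodalResidue (range (n + 1)) r (nodal (Icc 1 n) β) j = 1 :=
  sum_nodalResidue_nodal h.injOn β (by simp)

theorem sum_nodalResidue_div_sub (h : Interlaced n r β) {i : ℕ} (hi : i ∈ Icc 1 n) :
    ∑ j ∈ range (n + 1),
      nodalResidue (range (n + 1)) r (nodal (Icc 1 n) β) j / (β i - r j) = 0 := by
  obtain ⟨hi1, hin⟩ := mem_Icc.1 hi
  have hne : ∀ j ∈ range (n + 1), β i ≠ r j := fun j hj => by
    rcases lt_or_ge j i with hji | hij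
    · exact (h.lt_of_lt hin hji).ne'
    · exact (h.lt_of_le hi1 (mem_range_succ_iff.1 hj) hij).ne
  rw [← eval_div_eval_nodal h.injOn (degree_nodal_Icc_lt_card_range n β) hne,
    eval_nodal_at_node hi, zero_div]

theorem sum_nodalResidue_div (h : Interlaced n r β) (hr0 : 0 < r 0) :
    ∑ j ∈ range (n + 1), nodalResidue (range (n + 1)) r (nodal (Icc 1 n) β) j / r j =
      (∏ i ∈ Icc 1 n, β i) / ∏ k ∈ range (n + 1), r k := by
  have h0 := eval_div_eval_nodal h.injOn (degree_nodal_Icc_lt_card_range n β) (x := 0)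
    fun j hj => (h.pos hr0 (mem_range_succ_iff.1 hj)).ne
  simp only [eval_nodal, zero_sub, prod_neg, card_range, Nat.card_Icc, div_neg,
    sum_neg_distrib] at h0
  rw [← neg_neg (∑ j ∈ _, _), ← h0, Nat.add_sub_cancel, pow_succ, mul_assoc,
    mul_div_mul_left _ _ (pow_ne_zero _ (by norm_num))]
  ring

theorem sum_nodalResidue_div_sq (h : Interlaced n r β) (hr0 : 0 < r 0) :
    ∑ j ∈ range (n + 1), nodalResidue (range (n + 1)) r (nodal (Icc 1 n) β) j / r j ^ 2 =
      (∏ i ∈ Icc 1 n, β i) / (∏ k ∈ range (n + 1), r k) *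
        (∑ k ∈ range (n + 1), 1 / r k - ∑ i ∈ Icc 1 n, 1 / β i) := by
  have h0 := Lagrange.sum_nodalResidue_div_sq h.injOn β (by simp) (x := 0)
    (fun j hj => (h.pos hr0 (mem_range_succ_iff.1 hj)).ne)
    (fun i hi => (h.beta_pos hr0 hi).ne)
  simp only [eval_nodal, zero_sub, prod_neg, card_range, Nat.card_Icc, neg_sq,
    one_div_neg_eq_neg_one_div, sum_neg_distrib] at h0
  rw [h0, Nat.add_sub_cancel, pow_succ, mul_assoc,
    mul_div_mul_left _ _ (pow_ne_zero _ (by norm_num))]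
  ring

theorem mulVec_nodalResidue (h : Interlaced n r β) {A : Matrix (Fin (n + 1)) (Fin (n + 1)) ℝ}
    (hA : ∀ i j : Fin (n + 1), A i j = if (i : ℕ) = 0 then 1 else β i / (β i - r j)) :
    A *ᵥ (fun j => nodalResidue (range (n + 1)) r (nodal (Icc 1 n) β) j) = Pi.single 0 1 := by
  ext i
  simp only [mulVec, dotProduct, hA]
  by_cases hi : (i : ℕ) = 0
  · obtain rfl : i = 0 := Fin.ext hi
    simp only [Fin.val_zero, if_true, one_mul, Pi.single_eq_same]
    exact (Fin.sum_univ_eq_sum_range _ _).trans h.sum_nodalResidue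
  · rw [Pi.single_eq_of_ne (fun e => hi (by simp [e]))]
    simp only [if_neg hi]
    rw [Fin.sum_univ_eq_sum_range (fun j => β i / (β i - r j) *
        nodalResidue (range (n + 1)) r (nodal (Icc 1 n) β) j) (n + 1)]
    calc _ = β i * ∑ j ∈ range (n + 1),
          nodalResidue (range (n + 1)) r (nodal (Icc 1 n) β) j / (β i - r j) := by
          rw [mul_sum]; exact sum_congr rfl fun j _ => by ring
      _ = 0 := by
          rw [h.sum_nodalResidue_div_sub (mem_Icc.2 ⟨by omega, i.is_le⟩), mul_zero]

variable {K : ℕ → ℝ}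

theorem pos_of_eq_nodalResidue (h : Interlaced n r β) (hr0 : 0 < r 0)
    (hK : ∀ j ≤ n, K j = (∏ k ∈ range (n + 1), r k) / (∏ i ∈ Icc 1 n, β i) *
      nodalResidue (range (n + 1)) r (nodal (Icc 1 n) β) j / r j ^ 2) {j : ℕ} (hj : j ≤ n) :
    0 < K j := by
  rw [hK j hj]
  exact div_pos (mul_pos (div_pos (h.prod_pos hr0) (h.prod_beta_pos hr0)) (h.nodalResidue_pos hj))
    (pow_pos (h.pos hr0 hj) 2)

theorem sum_mul_eq_one_of_eq_nodalResidue (h : Interlaced n r β) (hr0 : 0 < r 0)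
    (hK : ∀ j ≤ n, K j = (∏ k ∈ range (n + 1), r k) / (∏ i ∈ Icc 1 n, β i) *
      nodalResidue (range (n + 1)) r (nodal (Icc 1 n) β) j / r j ^ 2) :
    ∑ j ∈ range (n + 1), K j * r j = 1 := by
  have hP := (h.prod_pos hr0).ne'
  have hB := (h.prod_beta_pos hr0).ne'
  calc _ = ∑ j ∈ range (n + 1), (∏ k ∈ range (n + 1), r k) / (∏ i ∈ Icc 1 n, β i) *
        (nodalResidue (range (n + 1)) r (nodal (Icc 1 n) β) j / r j) :=
        sum_congr rfl fun j hj => by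
          have hj : j ≤ n := mem_range_succ_iff.1 hj
          rw [hK j hj]
          field_simp [(h.pos hr0 hj).ne']
    _ = 1 := by rw [← mul_sum, h.sum_nodalResidue_div hr0]; field_simp

theorem sum_eq_of_eq_nodalResidue (h : Interlaced n r β) (hr0 : 0 < r 0)
    (hK : ∀ j ≤ n, K j = (∏ k ∈ range (n + 1), r k) / (∏ i ∈ Icc 1 n, β i) *
      nodalResidue (range (n + 1)) r (nodal (Icc 1 n) β) j / r j ^ 2) :
    ∑ j ∈ range (n + 1), K j = ∑ k ∈ range (n + 1), 1 / r k - ∑ i ∈ Icc 1 n, 1 / β i := by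
  have hP := (h.prod_pos hr0).ne'
  have hB := (h.prod_beta_pos hr0).ne'
  calc _ = ∑ j ∈ range (n + 1), (∏ k ∈ range (n + 1), r k) / (∏ i ∈ Icc 1 n, β i) *
        (nodalResidue (range (n + 1)) r (nodal (Icc 1 n) β) j / r j ^ 2) :=
        sum_congr rfl fun j hj => by rw [hK j (mem_range_succ_iff.1 hj), mul_div_assoc]
    _ = _ := by rw [← mul_sum, h.sum_nodalResidue_div_sq hr0]; field_simp

end Interlaced

theorem stmt17_general (c : ℝ)
    (mp : ℕ)
    (βp : ℕ → ℝ)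
    (r : ℕ → ℝ)
    (hr0 : 0 < r 0)
    (hinter : ∀ k, 1 ≤ k → k ≤ mp → r (k - 1) < βp k ∧ βp k < r k)
    (A : Matrix (Fin (mp + 1)) (Fin (mp + 1)) ℝ)
    (hA : ∀ i j : Fin (mp + 1), A i j = if (i : ℕ) = 0 then 1 else βp i / (βp i - r j))
    (hdet : A.det ≠ 0)
    (R : ℝ)
    (hR : R = (∏ k ∈ Finset.range (mp + 1), r k) / ∏ k ∈ Finset.Icc 1 mp, βp k)
    (K : ℕ → ℝ)
    (hK : ∀ j : Fin (mp + 1), K j = R * cof A 0 j / ((r j) ^ 2 * A.det))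
    (b : ℝ)
    (hb : b = c + (∑ i ∈ Finset.range (mp + 1), 1 / r i) - ∑ i ∈ Finset.Icc 1 mp, 1 / βp i)
    (u : ℝ → ℝ)
    (hu : ∀ x : ℝ,
      u x =
        if x < b then ∑ j ∈ Finset.range (mp + 1), K j * Real.exp (r j * (x - b))
        else x - c)
    :
    ContDiff ℝ 1 u ∧
    ContDiffOn ℝ 2 u ({b}ᶜ : Set ℝ) ∧
    Monotone u ∧
    ConvexOn ℝ Set.univ u ∧
    (∀ x : ℝ, x < b → x - c < u x) ∧
    (∀ x : ℝ, b ≤ x → u x = x - c) := by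
  have hint : Interlaced mp r βp := hinter
  have hKw : ∀ j ≤ mp, K j = (∏ k ∈ range (mp + 1), r k) / (∏ i ∈ Icc 1 mp, βp i) *
      nodalResidue (range (mp + 1)) r (nodal (Icc 1 mp) βp) j / r j ^ 2 := fun j hj => by
    have hcof := det_mul_eq_cof_of_mulVec_eq_single A (hint.mulVec_nodalResidue hA) ⟨j, by omega⟩
    rw [← hR, hK ⟨j, by omega⟩, ← hcof]
    field_simp
  have hKpos : ∀ j ∈ range (mp + 1), 0 < K j := fun j hj =>
    hint.pos_of_eq_nodalResidue hr0 hKw (mem_range_succ_iff.1 hj)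
  have hrpos : ∀ j ∈ range (mp + 1), 0 < r j := fun j hj => hint.pos hr0 (mem_range_succ_iff.1 hj)
  set g := fun y => ∑ j ∈ range (mp + 1), K j * Real.exp (r j * (y - b))
  have hg : ContDiff ℝ 2 g := by fun_prop
  have hgb : g b = b - c := by
    simp only [g, sub_self, mul_zero, Real.exp_zero, mul_one]
    rw [hint.sum_eq_of_eq_nodalResidue hr0 hKw, hb]
    ring
  have hg'b : deriv g b = 1 := by
    refine (hasDerivAt_sum_mul_exp _ K r b b).deriv.trans ?_
    simpa using hint.sum_mul_eq_one_of_eq_nodalResidue hr0 hKw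
  have hg' := strictMono_deriv_sum_mul_exp _ K r b nonempty_range_add_one hKpos hrpos
  have hdiff : Differentiable ℝ g := hg.differentiable two_ne_zero
  obtain rfl : u = tangentPaste g b c := funext hu
  exact ⟨contDiff_one_tangentPaste (hg.of_le one_le_two) hgb hg'b, contDiffOn_two_tangentPaste hg,
    monotone_tangentPaste hdiff hgb hg'b fun x _ =>
      (deriv_sum_mul_exp_pos _ K r b nonempty_range_add_one hKpos hrpos x).le,
    convexOn_tangentPaste hdiff hgb hg'b (hg'.monotone.monotoneOn _),
    fun x => sub_lt_tangentPaste hdiff hgb hg'b (hg'.strictMonoOn _), fun x => tangentPaste_of_le⟩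

theorem stmt17 (σ μ ρ lamn lamp c : ℝ)
    (hσ : 0 < σ) (hρ : 0 < ρ) (hlamn : 0 < lamn) (hlamp : 0 < lamp) (hc : 0 < c)
    (mp mn : ℕ) (hmp : 1 ≤ mp) (hmn : 1 ≤ mn)
    (ωp βp ωn βn : ℕ → ℝ)
    (hωp : ∀ k, 1 ≤ k → k ≤ mp → 0 < ωp k)
    (hωpsum : ∑ k ∈ Finset.Icc 1 mp, ωp k = 1)
    (hβp1 : 0 < βp 1)
    (hβpmono : ∀ k, 1 ≤ k → k < mp → βp k < βp (k + 1))
    (hωn : ∀ k, 1 ≤ k → k ≤ mn → 0 < ωn k)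
    (hωnsum : ∑ k ∈ Finset.Icc 1 mn, ωn k = 1)
    (hβn1 : 0 < βn 1)
    (hβnmono : ∀ k, 1 ≤ k → k < mn → βn k < βn (k + 1))
    (r : ℕ → ℝ)
    (hroot : ∀ j, j ≤ mp →
      σ ^ 2 * (r j) ^ 2 / 2 + μ * r j - (ρ + lamn + lamp)
        + lamp * ∑ i ∈ Finset.Icc 1 mp, ωp i * βp i / (βp i - r j)
        + lamn * ∑ i ∈ Finset.Icc 1 mn, ωn i * βn i / (r j + βn i) = 0)
    (hr0 : 0 < r 0)
    (hinter : ∀ k, 1 ≤ k → k ≤ mp → r (k - 1) < βp k ∧ βp k < r k)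
    (A : Matrix (Fin (mp + 1)) (Fin (mp + 1)) ℝ)
    (hA : ∀ i j : Fin (mp + 1), A i j = if (i : ℕ) = 0 then 1 else βp i / (βp i - r j))
    (hdet : A.det ≠ 0)
    (R : ℝ)
    (hR : R = (∏ k ∈ Finset.range (mp + 1), r k) / ∏ k ∈ Finset.Icc 1 mp, βp k)
    (K : ℕ → ℝ)
    (hK : ∀ j : Fin (mp + 1), K j = R * cof A 0 j / ((r j) ^ 2 * A.det))
    (b : ℝ)
    (hb : b = c + (∑ i ∈ Finset.range (mp + 1), 1 / r i) - ∑ i ∈ Finset.Icc 1 mp, 1 / βp i)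
    (u : ℝ → ℝ)
    (hu : ∀ x : ℝ,
      u x =
        if x < b then ∑ j ∈ Finset.range (mp + 1), K j * Real.exp (r j * (x - b))
        else x - c)
    :
    ContDiff ℝ 1 u ∧
    ContDiffOn ℝ 2 u ({b}ᶜ : Set ℝ) ∧
    Monotone u ∧
    ConvexOn ℝ Set.univ u ∧
    (∀ x : ℝ, x < b → x - c < u x) ∧
    (∀ x : ℝ, b ≤ x → u x = x - c) :=
  stmt17_general c mp βp r hr0 hinter A hA hdet R hR K hK b hb u hu
end

section
/- For every x ∈ ℝ and y ≥ 0: as α → 0⁺, v_α(x,y) converges to y·∑_{j=1}^{m_p+1} K_{j−1} e^{r_{j−1}(x−b*)} if x < b*, and to (x−c)·y if x ≥ b*; moreover, as α → ∞, v_α(x,y) converges to 0. -/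
/-
As `α → 0⁺` each factor `(1 - e^{-α r y}) / (α r)` tends to `y`, and as `α → ∞` it tends to `0`;
for `x > b*` the third branch is eventually active as `α → 0⁺`. The one non-trivial input is
`∑ K_j = b* - c`, which makes the limit at `x = b*` equal to `(b* - c) y`.

For that identity, Cramer's rule says that `(K_j r_j²)_j` is `R` times the solution of
`A t = e₀`, and this solution is `t_j = Q(r_j) w_j` with `Q = ∏ (X - β_i)` and `w_j` the
barycentric weights of the nodes `r_j`: pairing a row of `A` with `t` computes the top
coefficient of a polynomial of degree `≤ m_p`. Hence `∑ K_j = R ∑ Q(r_j) w_j / r_j² =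
-R (Q / W)'(0)` with `W = ∏ (X - r_j)`, and the logarithmic derivative of `Q / W` at `0` gives
`∑ 1/r_j - ∑ 1/β_i`.
-/

open Finset Matrix MeasureTheory

namespace Lagrange

open Polynomial

variable {F ι : Type*} [Field F] [DecidableEq ι] {s : Finset ι} {v : ι → F}

theorem sum_eval_mul_nodalWeight (hvs : Set.InjOn v s) {f : F[X]} (hf : f.natDegree < #s) :
    ∑ i ∈ s, f.eval (v i) * nodalWeight s v i = f.coeff (#s - 1) := by
  rw [coeff_eq_sum hvs (degree_le_natDegree.trans_lt (by exact_mod_cast hf))]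
  simp only [nodalWeight, prod_inv_distrib, div_eq_mul_inv]

omit [DecidableEq ι] in
theorem coeff_zero_nodal : (nodal s v).coeff 0 = ∏ i ∈ s, -v i := by
  simp [coeff_zero_eq_eval_zero, eval_nodal]

omit [DecidableEq ι] in
theorem coeff_zero_nodal_ne_zero (h0 : ∀ i ∈ s, v i ≠ 0) : (nodal s v).coeff 0 ≠ 0 := by
  rw [coeff_zero_nodal]
  exact prod_ne_zero_iff.2 fun i hi => neg_ne_zero.2 (h0 i hi)

theorem coeff_one_nodal (h0 : ∀ i ∈ s, v i ≠ 0) :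
    (nodal s v).coeff 1 = -(nodal s v).coeff 0 * ∑ i ∈ s, (v i)⁻¹ := by
  have hderiv : (nodal s v).coeff 1 = (derivative (nodal s v)).eval 0 := by
    rw [← coeff_zero_eq_eval_zero, coeff_derivative]
    norm_num
  rw [hderiv, derivative_nodal, eval_finsetSum, mul_sum]
  refine sum_congr rfl fun i hi => ?_
  rw [coeff_zero_nodal, ← mul_prod_erase s _ hi, eval_nodal]
  field_simp [h0 i hi]
  simp

theorem sum_eval_mul_nodalWeight_div (hvs : Set.InjOn v s) (hs : s.Nonempty)
    (h0 : ∀ i ∈ s, v i ≠ 0) {f : F[X]} (hf : f.natDegree ≤ #s) :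
    ∑ i ∈ s, f.eval (v i) * nodalWeight s v i / v i =
      f.coeff #s + f.coeff 0 * ∑ i ∈ s, nodalWeight s v i / v i := by
  have hdivX : f.divX.natDegree < #s := by
    have := hs.card_pos
    rw [natDegree_divX_eq_natDegree_tsub_one]
    omega
  have hsplit : ∀ i ∈ s, f.eval (v i) * nodalWeight s v i / v i =
      f.divX.eval (v i) * nodalWeight s v i + f.coeff 0 * (nodalWeight s v i / v i) := by
    intro i hi
    conv_lhs => rw [← divX_mul_X_add f]
    simp only [eval_add, eval_mul, eval_X, eval_C]
    field_simp [h0 i hi]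
  rw [sum_congr rfl hsplit, sum_add_distrib, ← mul_sum, sum_eval_mul_nodalWeight hvs hdivX,
    coeff_divX, Nat.sub_add_cancel hs.card_pos]

theorem sum_nodalWeight_div (hvs : Set.InjOn v s) (hs : s.Nonempty) (h0 : ∀ i ∈ s, v i ≠ 0) :
    ∑ i ∈ s, nodalWeight s v i / v i = -((nodal s v).coeff 0)⁻¹ := by
  have h := sum_eval_mul_nodalWeight_div hvs hs h0 (f := nodal s v) natDegree_nodal.le
  rw [sum_eq_zero fun i hi => by rw [eval_nodal_at_node hi, zero_mul, zero_div],
    ← natDegree_nodal (R := F), nodal_monic.coeff_natDegree] at h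
  have := coeff_zero_nodal_ne_zero h0
  field_simp
  linear_combination -h

theorem sum_eval_mul_nodalWeight_div_sq (hvs : Set.InjOn v s) (hs : s.Nonempty)
    (h0 : ∀ i ∈ s, v i ≠ 0) {f : F[X]} (hf : f.natDegree ≤ #s + 1) :
    ∑ i ∈ s, f.eval (v i) * nodalWeight s v i / v i ^ 2 =
      f.coeff (#s + 1) + f.coeff 1 * ∑ i ∈ s, nodalWeight s v i / v i
        + f.coeff 0 * ∑ i ∈ s, nodalWeight s v i / v i ^ 2 := by
  have hdivX : f.divX.natDegree ≤ #s := by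
    rw [natDegree_divX_eq_natDegree_tsub_one]
    omega
  have hsplit : ∀ i ∈ s, f.eval (v i) * nodalWeight s v i / v i ^ 2 =
      f.divX.eval (v i) * nodalWeight s v i / v i + f.coeff 0 * (nodalWeight s v i / v i ^ 2) := by
    intro i hi
    conv_lhs => rw [← divX_mul_X_add f]
    simp only [eval_add, eval_mul, eval_X, eval_C]
    field_simp [h0 i hi]
  rw [sum_congr rfl hsplit, sum_add_distrib, ← mul_sum,
    sum_eval_mul_nodalWeight_div hvs hs h0 hdivX, coeff_divX, coeff_divX]

theorem sum_nodalWeight_div_sq (hvs : Set.InjOn v s) (hs : s.Nonempty) (h0 : ∀ i ∈ s, v i ≠ 0) :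
    ∑ i ∈ s, nodalWeight s v i / v i ^ 2 = (nodal s v).coeff 1 / (nodal s v).coeff 0 ^ 2 := by
  have h := sum_eval_mul_nodalWeight_div_sq hvs hs h0 (f := nodal s v)
    (by rw [natDegree_nodal]; omega)
  rw [sum_eq_zero fun i hi => by rw [eval_nodal_at_node hi, zero_mul, zero_div],
    sum_nodalWeight_div hvs hs h0,
    coeff_eq_zero_of_natDegree_lt (by rw [natDegree_nodal]; omega)] at h
  have := coeff_zero_nodal_ne_zero h0
  rw [eq_div_iff (pow_ne_zero 2 this)]
  field_simp at h
  linear_combination -h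

/-- The right side is `-(f / nodal s v)'(0)`, as the partial fraction expansion
`f / nodal s v = ∑ i ∈ s, f (v i) * nodalWeight s v i / (X - v i)` predicts. -/
theorem sum_eval_mul_nodalWeight_div_sq_of_natDegree_lt (hvs : Set.InjOn v s) (hs : s.Nonempty)
    (h0 : ∀ i ∈ s, v i ≠ 0) {f : F[X]} (hf : f.natDegree < #s) :
    ∑ i ∈ s, f.eval (v i) * nodalWeight s v i / v i ^ 2 =
      (f.coeff 0 * (nodal s v).coeff 1 - f.coeff 1 * (nodal s v).coeff 0) /
        (nodal s v).coeff 0 ^ 2 := by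
  rw [sum_eval_mul_nodalWeight_div_sq hvs hs h0 (by omega), sum_nodalWeight_div hvs hs h0,
    sum_nodalWeight_div_sq hvs hs h0, coeff_eq_zero_of_natDegree_lt (by omega)]
  have := coeff_zero_nodal_ne_zero h0
  field_simp
  ring

end Lagrange

theorem cof_zero_eq_det_mul {n : ℕ} {A : Matrix (Fin (n + 1)) (Fin (n + 1)) ℝ}
    {u : Fin (n + 1) → ℝ} (hu : A *ᵥ u = Pi.single 0 1) (j : Fin (n + 1)) :
    cof A 0 j = A.det * u j := by
  have h : cramer A (A *ᵥ u) = A.det • u := by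
    rw [cramer_eq_adjugate_mulVec, mulVec_mulVec, adjugate_mul, smul_mulVec, one_mulVec]
  have hj := congrFun h j
  rw [hu, cramer_eq_adjugate_mulVec, mulVec_single_one, col_apply,
    adjugate_fin_succ_eq_det_submatrix] at hj
  exact hj

def Interlaces (n : ℕ) (r β : ℕ → ℝ) : Prop :=
  ∀ k, 1 ≤ k → k ≤ n → r (k - 1) < β k ∧ β k < r k

namespace Interlaces

variable {n : ℕ} {r β : ℕ → ℝ}

theorem strictMonoOn (h : Interlaces n r β) : StrictMonoOn r (Set.Iic n) :=
  strictMonoOn_Iic_of_lt_succ fun m hm => by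
    have hm := h (m + 1) (by omega) hm
    rw [Nat.add_sub_cancel] at hm
    exact hm.1.trans hm.2

theorem lt_of_lt (h : Interlaces n r β) {i j : ℕ} (hji : j < i) (hi : i ≤ n) : r j < β i :=
  (h.strictMonoOn.monotoneOn (Set.mem_Iic.2 (by omega)) (Set.mem_Iic.2 (by omega))
    (by omega : j ≤ i - 1)).trans_lt (h i (by omega) hi).1

theorem lt_of_le (h : Interlaces n r β) {i j : ℕ} (hi : 1 ≤ i) (hij : i ≤ j) (hj : j ≤ n) :
    β i < r j :=
  (h i hi (hij.trans hj)).2.trans_le <|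
    h.strictMonoOn.monotoneOn (Set.mem_Iic.2 (hij.trans hj)) (Set.mem_Iic.2 hj) hij

theorem ne (h : Interlaces n r β) {i j : ℕ} (hj : j ∈ range (n + 1)) (hi : i ∈ Icc 1 n) :
    r j ≠ β i := by
  rw [mem_range, Nat.lt_succ_iff] at hj
  rw [mem_Icc] at hi
  rcases lt_or_ge j i with hji | hij
  · exact (h.lt_of_lt hji hi.2).ne
  · exact (h.lt_of_le hi.1 hij hj).ne'

theorem injOn (h : Interlaces n r β) : Set.InjOn r (range (n + 1)) :=
  h.strictMonoOn.injOn.mono fun _ hj => Set.mem_Iic.2 (Nat.lt_succ_iff.1 (mem_range.1 hj))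

theorem pos (h : Interlaces n r β) (hr0 : 0 < r 0) {j : ℕ} (hj : j ≤ n) : 0 < r j :=
  hr0.trans_le <| h.strictMonoOn.monotoneOn (Set.mem_Iic.2 n.zero_le) (Set.mem_Iic.2 hj) j.zero_le

theorem pos_right (h : Interlaces n r β) (hr0 : 0 < r 0) {i : ℕ} (hi : i ∈ Icc 1 n) : 0 < β i :=
  hr0.trans (h.lt_of_lt (mem_Icc.1 hi).1 (mem_Icc.1 hi).2)

end Interlaces

open Polynomial Lagrange in
theorem mulVec_eval_nodal_mul_nodalWeight {n : ℕ} {β r : ℕ → ℝ}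
    (hrinj : Set.InjOn r (range (n + 1))) (hrβ : ∀ j ∈ range (n + 1), ∀ i ∈ Icc 1 n, r j ≠ β i)
    {A : Matrix (Fin (n + 1)) (Fin (n + 1)) ℝ}
    (hA : ∀ i j : Fin (n + 1), A i j = if (i : ℕ) = 0 then 1 else β i / (β i - r j)) :
    A *ᵥ (fun j => (nodal (Icc 1 n) β).eval (r j) * nodalWeight (range (n + 1)) r j) =
      Pi.single 0 1 := by
  have hcard : #(range (n + 1)) - 1 = n := by simp
  ext i
  simp only [mulVec, dotProduct, hA]
  rw [Fin.sum_univ_eq_sum_range (fun j => (if (i : ℕ) = 0 then 1 else β i / (β i - r j)) *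
    ((nodal (Icc 1 n) β).eval (r j) * nodalWeight (range (n + 1)) r j))]
  split_ifs with hi0
  · obtain rfl : i = 0 := Fin.ext hi0
    simp_rw [one_mul]
    rw [sum_eval_mul_nodalWeight hrinj (by simp [natDegree_nodal]), hcard, Pi.single_eq_same,
      ← (nodal_monic (s := Icc 1 n) (v := β)).coeff_natDegree, natDegree_nodal, Nat.card_Icc,
      Nat.add_sub_cancel]
  · have hiI : (i : ℕ) ∈ Icc 1 n := mem_Icc.2 ⟨Nat.one_le_iff_ne_zero.2 hi0, by omega⟩
    -- Row `i` cancels the factor `X - β i` of the nodal polynomial; the rest has degree `< n`.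
    have hfactor : ∀ j ∈ range (n + 1),
        β i / (β i - r j) * ((nodal (Icc 1 n) β).eval (r j) * nodalWeight (range (n + 1)) r j) =
          -β i * ((nodal ((Icc 1 n).erase i) β).eval (r j) * nodalWeight (range (n + 1)) r j) := by
      intro j hj
      have hne : β i - r j ≠ 0 := sub_ne_zero.2 (hrβ j hj i hiI).symm
      rw [nodal_eq_mul_nodal_erase hiI, eval_mul, eval_sub, eval_X, eval_C]
      field_simp
      ring
    have hdeg : (nodal ((Icc 1 n).erase i) β).natDegree < n := by
      rw [natDegree_nodal, card_erase_of_mem hiI, Nat.card_Icc]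
      omega
    rw [sum_congr rfl hfactor, ← mul_sum,
      sum_eval_mul_nodalWeight hrinj (by rw [card_range]; omega), hcard,
      coeff_eq_zero_of_natDegree_lt hdeg, mul_zero, Pi.single_eq_of_ne (Fin.ext_iff.not.2 hi0)]

open Polynomial Lagrange in
theorem sum_eq_sum_inv_sub_sum_inv_of_cof {n : ℕ} {β r K : ℕ → ℝ} {R : ℝ}
    {A : Matrix (Fin (n + 1)) (Fin (n + 1)) ℝ}
    (hβ : ∀ i ∈ Icc 1 n, β i ≠ 0) (hr : ∀ j ∈ range (n + 1), r j ≠ 0)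
    (hrinj : Set.InjOn r (range (n + 1))) (hrβ : ∀ j ∈ range (n + 1), ∀ i ∈ Icc 1 n, r j ≠ β i)
    (hA : ∀ i j : Fin (n + 1), A i j = if (i : ℕ) = 0 then 1 else β i / (β i - r j))
    (hdet : A.det ≠ 0) (hR : R = (∏ k ∈ range (n + 1), r k) / ∏ k ∈ Icc 1 n, β k)
    (hK : ∀ j : Fin (n + 1), K j = R * cof A 0 j / ((r j) ^ 2 * A.det)) :
    ∑ j ∈ range (n + 1), K j = ∑ j ∈ range (n + 1), 1 / r j - ∑ i ∈ Icc 1 n, 1 / β i := by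
  have hKeval : ∀ j ∈ range (n + 1),
      K j = R * ((nodal (Icc 1 n) β).eval (r j) * nodalWeight (range (n + 1)) r j / r j ^ 2) := by
    intro j hj
    have hcof := cof_zero_eq_det_mul (mulVec_eval_nodal_mul_nodalWeight hrinj hrβ hA)
      ⟨j, mem_range.1 hj⟩
    rw [hK ⟨j, mem_range.1 hj⟩, hcof]
    field_simp
  have hQdeg : (nodal (Icc 1 n) β).natDegree < #(range (n + 1)) := by simp [natDegree_nodal]
  rw [sum_congr rfl hKeval, ← mul_sum, sum_eval_mul_nodalWeight_div_sq_of_natDegree_lt hrinj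
    nonempty_range_add_one hr hQdeg, coeff_one_nodal hr, coeff_one_nodal hβ, coeff_zero_nodal,
    coeff_zero_nodal, prod_neg, prod_neg, hR, card_range, Nat.card_Icc, Nat.add_sub_cancel]
  have hβprod : ∏ k ∈ Icc 1 n, β k ≠ 0 := prod_ne_zero_iff.2 hβ
  have hrprod : ∏ k ∈ range (n + 1), r k ≠ 0 := prod_ne_zero_iff.2 hr
  simp only [one_div]
  field_simp
  ring

open Filter Topology Real

theorem tendsto_one_sub_exp_neg_mul_div (t : ℝ) :
    Tendsto (fun a : ℝ => (1 - exp (-(a * t))) / a) (𝓝[≠] 0) (𝓝 t) := by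
  have hderiv : HasDerivAt (fun a : ℝ => 1 - exp (-(a * t))) t 0 := by
    simpa using ((hasDerivAt_id (0 : ℝ)).mul_const t).neg.exp.const_sub 1
  refine (hasDerivAt_iff_tendsto_slope_zero.1 hderiv).congr fun a => ?_
  simp [div_eq_inv_mul]

theorem tendsto_div_mul_one_sub_exp_nhdsNE (k : ℝ) {ρ : ℝ} (hρ : ρ ≠ 0) (y : ℝ) :
    Tendsto (fun a : ℝ => k / (a * ρ) * (1 - exp (-(a * ρ * y)))) (𝓝[≠] 0) (𝓝 (k * y)) := by
  have h := (tendsto_one_sub_exp_neg_mul_div (ρ * y)).const_mul (k / ρ)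
  convert h using 1
  · ext a
    rw [mul_assoc a ρ y]
    ring
  · field_simp

theorem tendsto_div_mul_one_sub_exp_atTop (k : ℝ) {ρ y : ℝ} (hρ : 0 < ρ) (hy : 0 < y) (d : ℝ) :
    Tendsto (fun a : ℝ => k / (a * ρ) * (1 - exp (-(a * ρ * (y - d / a))))) atTop (𝓝 0) := by
  have hexponent : Tendsto (fun a : ℝ => -(a * ρ * (y - d / a))) atTop atBot := by
    have hlin : Tendsto (fun a : ℝ => ρ * d - a * (ρ * y)) atTop atBot :=
      tendsto_atBot_add_const_left _ _ <| tendsto_neg_atTop_atBot.comp <|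
        tendsto_id.atTop_mul_const (mul_pos hρ hy)
    refine hlin.congr' ((eventually_ne_atTop 0).mono fun a ha => ?_)
    field_simp
    ring
  have hnum : Tendsto (fun a : ℝ => k / ρ * (1 - exp (-(a * ρ * (y - d / a))))) atTop
      (𝓝 (k / ρ * (1 - 0))) :=
    ((tendsto_exp_atBot.comp hexponent).const_sub 1).const_mul _
  refine (hnum.div_atTop tendsto_id).congr fun a => ?_
  simp only [id]
  ring

noncomputable def vAlpha (n : ℕ) (K r : ℕ → ℝ) (b c a x y : ℝ) : ℝ :=
  if x < b then
    ∑ j ∈ range n, K j / (a * r j) * (1 - exp (-(a * r j * y))) * exp (r j * (x - b))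
  else if x < a * y + b then
    (∑ j ∈ range n, K j / (a * r j) * (1 - exp (-(a * r j * (y - (x - b) / a)))))
      + ((x - c) ^ 2 - (b - c) ^ 2) / (2 * a)
  else (x - c) * y - a * y ^ 2 / 2

section vAlpha

variable {n : ℕ} {K r : ℕ → ℝ} {b c x y : ℝ}

theorem vAlpha_zero_right (a : ℝ) : vAlpha n K r b c a x 0 = 0 := by
  unfold vAlpha
  split_ifs with hxb hxab
  · simp
  · simp at hxab
    exact absurd hxab hxb
  · simp

theorem tendsto_vAlpha_nhdsGT_of_lt (hr : ∀ j ∈ range n, r j ≠ 0) (hxb : x < b) :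
    Tendsto (fun a => vAlpha n K r b c a x y) (𝓝[>] 0)
      (𝓝 (y * ∑ j ∈ range n, K j * exp (r j * (x - b)))) := by
  simp only [vAlpha, if_pos hxb, mul_sum]
  refine tendsto_finsetSum _ fun j hj => ?_
  convert ((tendsto_div_mul_one_sub_exp_nhdsNE (K j) (hr j hj) y).mul_const
    (exp (r j * (x - b)))).mono_left (nhdsGT_le_nhdsNE 0) using 2
  ring

theorem tendsto_vAlpha_nhdsGT_of_le (hr : ∀ j ∈ range n, r j ≠ 0)
    (hK : ∑ j ∈ range n, K j = b - c) (hy : 0 ≤ y) (hbx : b ≤ x) :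
    Tendsto (fun a => vAlpha n K r b c a x y) (𝓝[>] 0) (𝓝 ((x - c) * y)) := by
  rcases hy.eq_or_lt with rfl | hy
  · simp [vAlpha_zero_right]
  rcases hbx.eq_or_lt with rfl | hbx
  · have hsum : Tendsto (fun a => ∑ j ∈ range n, K j / (a * r j) * (1 - exp (-(a * r j * y))))
        (𝓝[>] 0) (𝓝 ((b - c) * y)) := by
      rw [← hK, sum_mul]
      exact tendsto_finsetSum _ fun j hj =>
        (tendsto_div_mul_one_sub_exp_nhdsNE (K j) (hr j hj) y).mono_left (nhdsGT_le_nhdsNE 0)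
    refine hsum.congr' (eventually_nhdsWithin_of_forall fun a (ha : 0 < a) => ?_)
    simp [vAlpha, mul_pos ha hy]
  · have hsmall : ∀ᶠ a in 𝓝[>] 0, a * y < x - b := by
      have h : Tendsto (fun a => a * y) (𝓝[>] (0 : ℝ)) (𝓝 0) := by
        simpa using ((continuous_mul_const y).tendsto 0).mono_left nhdsWithin_le_nhds
      exact h.eventually (gt_mem_nhds (sub_pos.2 hbx))
    have hlim : Tendsto (fun a => (x - c) * y - a * y ^ 2 / 2) (𝓝[>] 0) (𝓝 ((x - c) * y)) := by
      have h : Continuous fun a : ℝ => (x - c) * y - a * y ^ 2 / 2 := by fun_prop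
      simpa using (h.tendsto 0).mono_left nhdsWithin_le_nhds
    refine hlim.congr' (hsmall.mono fun a ha => ?_)
    simp only [vAlpha, if_neg (not_lt.2 hbx.le), if_neg (show ¬x < a * y + b by linarith)]

theorem tendsto_vAlpha_atTop (hr : ∀ j ∈ range n, 0 < r j) (hy : 0 ≤ y) :
    Tendsto (fun a => vAlpha n K r b c a x y) atTop (𝓝 0) := by
  rcases hy.eq_or_lt with rfl | hy
  · simp [vAlpha_zero_right]
  by_cases hxb : x < b
  · simp only [vAlpha, if_pos hxb]
    simpa using tendsto_finsetSum (range n) fun j hj =>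
      (tendsto_div_mul_one_sub_exp_atTop (K j) (hr j hj) hy 0).mul_const (exp (r j * (x - b)))
  · have hsum := tendsto_finsetSum (range n) fun j hj =>
      tendsto_div_mul_one_sub_exp_atTop (K j) (hr j hj) hy (x - b)
    have hquad : Tendsto (fun a : ℝ => ((x - c) ^ 2 - (b - c) ^ 2) / (2 * a)) atTop (𝓝 0) :=
      tendsto_const_nhds.div_atTop (tendsto_id.const_mul_atTop two_pos)
    have h := hsum.add hquad
    rw [sum_const_zero, add_zero] at h
    refine h.congr' ((eventually_gt_atTop ((x - b) / y)).mono fun a ha => ?_)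
    rw [div_lt_iff₀ hy] at ha
    simp only [vAlpha, if_neg hxb, if_pos (show x < a * y + b by linarith)]

end vAlpha

theorem stmt19_general (c : ℝ)
    (mp : ℕ)
    (βp : ℕ → ℝ)
    (r : ℕ → ℝ)
    (hr0 : 0 < r 0)
    (hinter : ∀ k, 1 ≤ k → k ≤ mp → r (k - 1) < βp k ∧ βp k < r k)
    (A : Matrix (Fin (mp + 1)) (Fin (mp + 1)) ℝ)
    (hA : ∀ i j : Fin (mp + 1), A i j = if (i : ℕ) = 0 then 1 else βp i / (βp i - r j))
    (hdet : A.det ≠ 0)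
    (R : ℝ)
    (hR : R = (∏ k ∈ Finset.range (mp + 1), r k) / ∏ k ∈ Finset.Icc 1 mp, βp k)
    (K : ℕ → ℝ)
    (hK : ∀ j : Fin (mp + 1), K j = R * cof A 0 j / ((r j) ^ 2 * A.det))
    (b : ℝ)
    (hb : b = c + (∑ i ∈ Finset.range (mp + 1), 1 / r i) - ∑ i ∈ Finset.Icc 1 mp, 1 / βp i)
    (V : ℝ → ℝ → ℝ → ℝ)
    (hV : ∀ a : ℝ, 0 < a → ∀ x y : ℝ,
      V a x y =
        if x < b then
          ∑ j ∈ Finset.range (mp + 1),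
            K j / (a * r j) * (1 - Real.exp (-(a * r j * y))) * Real.exp (r j * (x - b))
        else if x < a * y + b then
          (∑ j ∈ Finset.range (mp + 1),
            K j / (a * r j) * (1 - Real.exp (-(a * r j * (y - (x - b) / a)))))
            + ((x - c) ^ 2 - (b - c) ^ 2) / (2 * a)
        else (x - c) * y - a * y ^ 2 / 2)
    :
    ∀ x y : ℝ, 0 ≤ y →
      (x < b →
        Filter.Tendsto (fun a => V a x y) (nhdsWithin 0 (Set.Ioi 0))
          (nhds (y * ∑ j ∈ Finset.range (mp + 1), K j * Real.exp (r j * (x - b))))) ∧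
      (b ≤ x →
        Filter.Tendsto (fun a => V a x y) (nhdsWithin 0 (Set.Ioi 0))
          (nhds ((x - c) * y))) ∧
      Filter.Tendsto (fun a => V a x y) Filter.atTop (nhds 0) := by
  intro x y hy
  have hI : Interlaces mp r βp := hinter
  have hr : ∀ j ∈ range (mp + 1), 0 < r j := fun j hj =>
    hI.pos hr0 (Nat.lt_succ_iff.1 (mem_range.1 hj))
  have hKsum : ∑ j ∈ range (mp + 1), K j = b - c := by
    rw [sum_eq_sum_inv_sub_sum_inv_of_cof (fun i hi => (hI.pos_right hr0 hi).ne')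
      (fun j hj => (hr j hj).ne') hI.injOn (fun j hj i hi => hI.ne hj hi) hA hdet hR hK, hb]
    ring
  have hV0 : ∀ᶠ a in 𝓝[>] 0, vAlpha (mp + 1) K r b c a x y = V a x y :=
    eventually_nhdsWithin_of_forall fun a ha => (hV a ha x y).symm
  have hVtop : ∀ᶠ a in atTop, vAlpha (mp + 1) K r b c a x y = V a x y :=
    (eventually_gt_atTop 0).mono fun a ha => (hV a ha x y).symm
  exact ⟨fun hxb => (tendsto_vAlpha_nhdsGT_of_lt (fun j hj => (hr j hj).ne') hxb).congr' hV0,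
    fun hbx => (tendsto_vAlpha_nhdsGT_of_le (fun j hj => (hr j hj).ne') hKsum hy hbx).congr' hV0,
    (tendsto_vAlpha_atTop hr hy).congr' hVtop⟩

theorem stmt19 (σ μ ρ lamn lamp c : ℝ)
    (hσ : 0 < σ) (hρ : 0 < ρ) (hlamn : 0 < lamn) (hlamp : 0 < lamp) (hc : 0 < c)
    (mp mn : ℕ) (hmp : 1 ≤ mp) (hmn : 1 ≤ mn)
    (ωp βp ωn βn : ℕ → ℝ)
    (hωp : ∀ k, 1 ≤ k → k ≤ mp → 0 < ωp k)
    (hωpsum : ∑ k ∈ Finset.Icc 1 mp, ωp k = 1)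
    (hβp1 : 0 < βp 1)
    (hβpmono : ∀ k, 1 ≤ k → k < mp → βp k < βp (k + 1))
    (hωn : ∀ k, 1 ≤ k → k ≤ mn → 0 < ωn k)
    (hωnsum : ∑ k ∈ Finset.Icc 1 mn, ωn k = 1)
    (hβn1 : 0 < βn 1)
    (hβnmono : ∀ k, 1 ≤ k → k < mn → βn k < βn (k + 1))
    (r : ℕ → ℝ)
    (hroot : ∀ j, j ≤ mp →
      σ ^ 2 * (r j) ^ 2 / 2 + μ * r j - (ρ + lamn + lamp)
        + lamp * ∑ i ∈ Finset.Icc 1 mp, ωp i * βp i / (βp i - r j)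
        + lamn * ∑ i ∈ Finset.Icc 1 mn, ωn i * βn i / (r j + βn i) = 0)
    (hr0 : 0 < r 0)
    (hinter : ∀ k, 1 ≤ k → k ≤ mp → r (k - 1) < βp k ∧ βp k < r k)
    (A : Matrix (Fin (mp + 1)) (Fin (mp + 1)) ℝ)
    (hA : ∀ i j : Fin (mp + 1), A i j = if (i : ℕ) = 0 then 1 else βp i / (βp i - r j))
    (hdet : A.det ≠ 0)
    (R : ℝ)
    (hR : R = (∏ k ∈ Finset.range (mp + 1), r k) / ∏ k ∈ Finset.Icc 1 mp, βp k)
    (K : ℕ → ℝ)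
    (hK : ∀ j : Fin (mp + 1), K j = R * cof A 0 j / ((r j) ^ 2 * A.det))
    (b : ℝ)
    (hb : b = c + (∑ i ∈ Finset.range (mp + 1), 1 / r i) - ∑ i ∈ Finset.Icc 1 mp, 1 / βp i)
    (V : ℝ → ℝ → ℝ → ℝ)
    (hV : ∀ a : ℝ, 0 < a → ∀ x y : ℝ,
      V a x y =
        if x < b then
          ∑ j ∈ Finset.range (mp + 1),
            K j / (a * r j) * (1 - Real.exp (-(a * r j * y))) * Real.exp (r j * (x - b))
        else if x < a * y + b then
          (∑ j ∈ Finset.range (mp + 1),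
            K j / (a * r j) * (1 - Real.exp (-(a * r j * (y - (x - b) / a)))))
            + ((x - c) ^ 2 - (b - c) ^ 2) / (2 * a)
        else (x - c) * y - a * y ^ 2 / 2)
    :
    ∀ x y : ℝ, 0 ≤ y →
      (x < b →
        Filter.Tendsto (fun a => V a x y) (nhdsWithin 0 (Set.Ioi 0))
          (nhds (y * ∑ j ∈ Finset.range (mp + 1), K j * Real.exp (r j * (x - b))))) ∧
      (b ≤ x →
        Filter.Tendsto (fun a => V a x y) (nhdsWithin 0 (Set.Ioi 0))
          (nhds ((x - c) * y))) ∧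
      Filter.Tendsto (fun a => V a x y) Filter.atTop (nhds 0) :=
  stmt19_general c mp βp r hr0 hinter A hA hdet R hR K hK b hb V hV
end
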